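/- Let c : ℝⁿ → ℝ^m be continuously differentiable, let C = {x ∈ ℝⁿ : cᵢ(x) ≥ 0 for all i}, and let x̄ ∈ C. Denote by A(x̄) = {i : cᵢ(x̄) = 0} the active set. If the gradients {∇cᵢ(x̄) : i ∈ A(x̄)} are linearly independent (LICQ), then the Bouligand tangent cone of C at x̄ equals the linearized cone {d ∈ ℝⁿ : ⟨∇cᵢ(x̄), d⟩ ≥ 0 for all i ∈ A(x̄)}. -/

import Mathlib

open Filter Topology RealInnerProductSpace

noncomputable section

/-- The Bouligand tangent cone of a set `S` at a point `p`: the set of directions `d`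
such that there are sequences `x k ∈ S`, `x k → p`, and positive reals `t k → 0`
with `(x k - p) / t k → d`. -/
def bouligandTangentCone {H : Type*} [NormedAddCommGroup H] [InnerProductSpace ℝ H]
    (S : Set H) (p : H) : Set H :=
  {d | ∃ (x : ℕ → H) (t : ℕ → ℝ), (∀ k, x k ∈ S) ∧ (∀ k, 0 < t k) ∧
    Tendsto x atTop (𝓝 p) ∧ Tendsto t atTop (𝓝 0) ∧
    Tendsto (fun k => (t k)⁻¹ • (x k - p)) atTop (𝓝 d)}

/-- The polar cone of a set `K`: all vectors making a non-positive inner product with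
every element of `K`. -/
def polarCone {H : Type*} [NormedAddCommGroup H] [InnerProductSpace ℝ H]
    (K : Set H) : Set H :=
  {v | ∀ d ∈ K, ⟪v, d⟫ ≤ 0}

/-- `a` is the unique minimizer of `f` over `S`. -/
def IsUniqueMinOn {H : Type*} (f : H → ℝ) (S : Set H) (a : H) : Prop :=
  a ∈ S ∧ (∀ b ∈ S, f a ≤ f b) ∧ ∀ b ∈ S, (∀ u ∈ S, f b ≤ f u) → b = a

/-!
Under LICQ the Gram matrix of the active gradients is invertible, so some `v` has
`⟪∇cᵢ(x̄), v⟫ = 1` for every active `i`. For `d` in the linearized cone each direction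
`d + ε v`, `ε > 0`, strictly increases every active constraint to first order, so a short ray
from `x̄` in that direction stays in `C`; a diagonal choice of points on these rays with
`ε → 0` exhibits `d` as a tangent direction. Conversely, `x̄` minimizes every active `cᵢ`
over `C`, and first-order optimality along tangent directions gives `⟪∇cᵢ(x̄), d⟫ ≥ 0`.
-/

section InnerProductSpace

variable {H : Type*} [NormedAddCommGroup H] [InnerProductSpace ℝ H]

theorem LinearIndependent.exists_forall_inner_eq_one {ι : Type*} [Finite ι] {g : ι → H}
    (hg : LinearIndependent ℝ g) : ∃ v, ∀ i, ⟪g i, v⟫ = 1 := by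
  classical
  have := Fintype.ofFinite ι
  obtain ⟨a, ha⟩ := Matrix.mulVec_surjective_iff_isUnit.2
    (Matrix.posDef_gram_of_linearIndependent hg).isUnit (fun _ => 1)
  refine ⟨∑ j, a j • g j, fun i => ?_⟩
  simpa [inner_sum, real_inner_smul_right, Matrix.mulVec, dotProduct, Matrix.gram, mul_comm]
    using congrFun ha i

theorem bouligandTangentCone_subset_posTangentConeAt (S : Set H) (p : H) :
    bouligandTangentCone S p ⊆ posTangentConeAt S p := by
  rintro d ⟨x, t, hxS, ht, hx, -, hd⟩
  refine mem_tangentConeAt_of_seq atTop (fun k => (⟨(t k)⁻¹, (inv_pos.2 (ht k)).le⟩ : NNReal))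
    (fun k => x k - p) ?_ (.of_forall fun k => by simpa using hxS k) ?_
  · simpa using hx.sub_const p
  · exact hd.congr fun k => (NNReal.smul_def _ _).symm

theorem fderiv_nonneg_of_mem_bouligandTangentCone {S : Set H} {p d : H} {f : H → ℝ}
    (hf : DifferentiableAt ℝ f p) (hfS : ∀ x ∈ S, 0 ≤ f x) (hfp : f p = 0)
    (hd : d ∈ bouligandTangentCone S p) : 0 ≤ fderiv ℝ f p d := by
  have hmin : IsMinOn f S p := fun x hx => hfp ▸ hfS x hx
  exact hmin.localize.hasFDerivWithinAt_nonneg hf.hasFDerivAt.hasFDerivWithinAt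
    (bouligandTangentCone_subset_posTangentConeAt S p hd)

theorem mem_bouligandTangentCone_of_tendsto {S : Set H} {p d : H} {v : ℕ → H}
    (hv : Tendsto v atTop (𝓝 d)) (hS : ∀ k, ∀ᶠ t in 𝓝[>] (0 : ℝ), p + t • v k ∈ S) :
    d ∈ bouligandTangentCone S p := by
  have hstep (k : ℕ) : ∃ t ∈ Set.Ioo (0 : ℝ) (1 / (k + 1)), p + t • v k ∈ S :=
    ((eventually_mem_set.2 (Ioo_mem_nhdsGT (by positivity))).and (hS k)).exists
  choose t ht hmem using hstep
  have ht0 : Tendsto t atTop (𝓝 0) :=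
    squeeze_zero (fun k => (ht k).1.le) (fun k => (ht k).2.le)
      tendsto_one_div_add_atTop_nhds_zero_nat
  refine ⟨fun k => p + t k • v k, t, hmem, fun k => (ht k).1, ?_, ht0, ?_⟩
  · simpa using tendsto_const_nhds.add (ht0.smul hv)
  · exact hv.congr fun k => by simp [inv_smul_smul₀ (ht k).1.ne']

end InnerProductSpace

section NormedSpace

variable {E : Type*} [NormedAddCommGroup E] [NormedSpace ℝ E]

theorem eventually_pos_of_fderiv_pos {f : E → ℝ} {p v : E} (hf : DifferentiableAt ℝ f p)
    (hfp : f p = 0) (hv : 0 < fderiv ℝ f p v) :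
    ∀ᶠ t in 𝓝[>] (0 : ℝ), 0 < f (p + t • v) := by
  have hslope := (hasLineDerivAt_iff_tendsto_slope_zero.mp
    (hf.hasFDerivAt.hasLineDerivAt v)).mono_left (nhdsGT_le_nhdsNE 0)
  filter_upwards [hslope.eventually (eventually_gt_nhds hv), self_mem_nhdsWithin]
    with t hpos (ht : 0 < t)
  simpa [hfp, ht] using hpos

theorem eventually_forall_nonneg_add_smul {ι : Type*} [Finite ι] {c : ι → E → ℝ} {p v : E}
    (hc : ∀ i, DifferentiableAt ℝ (c i) p) (hp : ∀ i, 0 ≤ c i p)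
    (hv : ∀ i, c i p = 0 → 0 < fderiv ℝ (c i) p v) :
    ∀ᶠ t in 𝓝[>] (0 : ℝ), ∀ i, 0 ≤ c i (p + t • v) := by
  refine eventually_all.2 fun i => ?_
  rcases (hp i).eq_or_lt with hi | hi
  · exact (eventually_pos_of_fderiv_pos (hc i) hi.symm (hv i hi.symm)).mono fun _ => le_of_lt
  · have hcont := ((hc i).hasFDerivAt.hasLineDerivAt v).continuousAt
    have hi' : 0 < c i (p + (0 : ℝ) • v) := by simpa using hi
    exact nhdsWithin_le_nhds ((hcont.eventually (eventually_gt_nhds hi')).mono fun _ => le_of_lt)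

end NormedSpace

/-- Under LICQ, the Bouligand tangent cone of a finitely defined set
`C = {x : c(x) ≥ 0}` at `x̄ ∈ C` equals the linearized cone of the active constraints. -/
theorem tangentCone_eq_linearized_cone (n m : ℕ)
    (c : Fin m → EuclideanSpace ℝ (Fin n) → ℝ)
    (hc : ∀ i, ContDiff ℝ 1 (c i))
    (C : Set (EuclideanSpace ℝ (Fin n)))
    (hC : C = {x | ∀ i, 0 ≤ c i x})
    (xb : EuclideanSpace ℝ (Fin n)) (hxb : xb ∈ C)
    (licq : LinearIndependent ℝ
      (fun i : {i : Fin m // c i xb = 0} => gradient (c i.1) xb)) :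
    bouligandTangentCone C xb =
      {d | ∀ i, c i xb = 0 → 0 ≤ ⟪gradient (c i) xb, d⟫} := by
  subst hC
  have hdiff (i : Fin m) : DifferentiableAt ℝ (c i) xb := (hc i).differentiable one_ne_zero xb
  ext d
  simp only [Set.mem_ofPred_eq, inner_gradient_left]
  constructor
  · intro hd i hi
    exact fderiv_nonneg_of_mem_bouligandTangentCone (hdiff i)
      (fun x (hx : ∀ j, 0 ≤ c j x) => hx i) hi hd
  · intro hd
    obtain ⟨v, hv⟩ := licq.exists_forall_inner_eq_one
    have hperturb : Tendsto (fun k : ℕ => d + (1 / (k + 1) : ℝ) • v) atTop (𝓝 d) := by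
      simpa using (tendsto_const_nhds (x := d)).add
        ((tendsto_one_div_add_atTop_nhds_zero_nat (𝕜 := ℝ)).smul_const v)
    refine mem_bouligandTangentCone_of_tendsto hperturb fun k =>
      eventually_forall_nonneg_add_smul hdiff hxb fun i hi => ?_
    have hvi : fderiv ℝ (c i) xb v = 1 := by simpa using hv ⟨i, hi⟩
    rw [map_add, map_smul, hvi, smul_eq_mul, mul_one]
    linarith [hd i hi, Nat.one_div_pos_of_nat (α := ℝ) (n := k)]
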